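/- arXiv:0706.0725 — 2 statements merged into one kernel-verified Lean document; each statement's English description precedes it below -/
import Mathlib

section
/- Let α, β be odd integers and n, m ≥ 1 with n = 2m. Then the polynomial f(x) = 2ⁿ + 2ᵐβx + αx² is irreducible both as a polynomial in ℤ₂[x] and as an element of ℤ[[x]]. -/
/-!
Since `α` is a unit of `ℤ₂`, the quadratic polynomial is irreducible as soon as it has
no root, and a root `r` would give `(2αr + 2ᵐβ)² = 4ᵐ (β² - 4α)`. For the power series,
in a factorisation `g * h` into non-units both `g₀` and `h₀` are even (as `g₀h₀ = 4ᵐ`),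
and comparing the coefficients of `1`, `x`, `x²` gives
`(g₁h₀ - h₁g₀)² = 4ᵐ (β² - 4α + 8w)` with `2w = g₀h₂ + h₀g₂`. In both cases, as `ℤ` and
`ℤ₂` are integrally closed, `β² - 4α + 8w` would be a square; but it is `5` modulo `8`,
which is not a square modulo `8`.
-/

theorem isSquare_of_sq_eq_sq_mul {R : Type*} [CommRing R] [IsDomain R] [IsIntegrallyClosed R]
    {a s d : R} (ha : a ≠ 0) (h : s ^ 2 = a ^ 2 * d) : IsSquare d := by
  obtain ⟨t, rfl⟩ : a ∣ s := (IsIntegrallyClosed.pow_dvd_pow_iff two_ne_zero).1 ⟨d, h⟩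
  refine ⟨t, mul_left_cancel₀ (pow_ne_zero 2 ha) ?_⟩
  linear_combination -h

theorem not_isSquare_sq_sub_four_mul_add_eight_mul {R : Type*} [CommRing R]
    (φ : R →+* ZMod 8) {α β : ℤ} (hα : Odd α) (hβ : Odd β) (w : R) :
    ¬ IsSquare ((β : R) ^ 2 - 4 * α + 8 * w) := by
  rintro ⟨t, ht⟩
  obtain ⟨j, rfl⟩ := hα
  obtain ⟨k, rfl⟩ := hβ
  have h8 : (8 : ZMod 8) = 0 := rfl
  have five_not_square : ∀ t j k : ZMod 8, t * t ≠ (2 * k + 1) ^ 2 - 4 * (2 * j + 1) := by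
    decide
  apply five_not_square (φ t) j k
  simpa only [map_mul, map_add, map_sub, map_pow, map_intCast, map_ofNat, map_one,
    Int.cast_add, Int.cast_mul, Int.cast_ofNat, Int.cast_one, h8, zero_mul, add_zero]
    using congrArg φ ht.symm

theorem sq_ne_two_pow_sq_mul {R : Type*} [CommRing R] [IsDomain R] [IsIntegrallyClosed R]
    [CharZero R] (φ : R →+* ZMod 8) {α β : ℤ} (hα : Odd α) (hβ : Odd β) (m : ℕ) (s w : R) :
    s ^ 2 ≠ ((2 : R) ^ m) ^ 2 * ((β : R) ^ 2 - 4 * α + 8 * w) := fun h =>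
  not_isSquare_sq_sub_four_mul_add_eight_mul φ hα hβ w
    (isSquare_of_sq_eq_sq_mul (pow_ne_zero m two_ne_zero) h)

theorem Prime.isUnit_or_dvd_of_dvd_pow {M : Type*} [CommMonoidWithZero M] [IsCancelMulZero M]
    {p a : M} (hp : Prime p) {n : ℕ} (h : a ∣ p ^ n) : IsUnit a ∨ p ∣ a := by
  obtain ⟨i, -, hi⟩ := (dvd_prime_pow hp n).1 h
  rcases i with _ | i
  · exact .inl (hi.isUnit_iff.2 (by simp))
  · exact .inr (hi.symm.dvd_iff_dvd_right.1 (dvd_pow_self p i.succ_ne_zero))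

theorem PadicInt.isUnit_intCast_iff {p : ℕ} [Fact p.Prime] (k : ℤ) :
    IsUnit (k : ℤ_[p]) ↔ ¬ (p : ℤ) ∣ k := by
  rw [PadicInt.isUnit_iff, ← PadicInt.norm_int_lt_one_iff_dvd, not_lt]
  exact ⟨fun h => h.ge, fun h => le_antisymm (PadicInt.norm_le_one _) h⟩

open Polynomial in
theorem Polynomial.irreducible_of_isUnit_leadingCoeff_of_not_isRoot {R : Type*} [CommRing R]
    [IsDomain R] {p : R[X]} (hu : IsUnit p.leadingCoeff) (hp2 : 2 ≤ p.natDegree)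
    (hp3 : p.natDegree ≤ 3) (hroot : ∀ x, ¬ p.IsRoot x) : Irreducible p := by
  obtain ⟨u, hu⟩ := hu
  have hmonic : (C (↑u⁻¹ : R) * p).Monic :=
    monic_C_mul_of_mul_leadingCoeff_eq_one (by rw [← hu, Units.inv_mul])
  have hdeg := natDegree_C_mul_of_isUnit u⁻¹.isUnit p
  rw [← irreducible_isUnit_mul (isUnit_C.2 u⁻¹.isUnit),
    hmonic.irreducible_iff_roots_eq_zero_of_degree_le_three (hdeg ▸ hp2) (hdeg ▸ hp3),
    roots_C_mul _ u⁻¹.ne_zero]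
  exact Multiset.eq_zero_of_forall_notMem fun x hx => hroot x (mem_roots'.1 hx).2

open PowerSeries in
theorem PowerSeries.coeff_two_mul {R : Type*} [CommSemiring R] (φ ψ : R⟦X⟧) :
    coeff 2 (φ * ψ) =
      coeff 2 φ * constantCoeff ψ + coeff 1 φ * coeff 1 ψ + coeff 2 ψ * constantCoeff φ := by
  simp only [coeff_mul, Finset.Nat.sum_antidiagonal_succ, coeff_zero_eq_constantCoeff,
    Finset.HasAntidiagonal.antidiagonal_zero, Finset.sum_singleton]
  ring

open Polynomial in
theorem irreducible_padicInt_quadratic {α β : ℤ} (hα : Odd α) (hβ : Odd β) (m : ℕ) :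
    Irreducible (C ((2 : ℤ_[2]) ^ (2 * m)) + C ((2 : ℤ_[2]) ^ m * (β : ℤ_[2])) * X +
      C (α : ℤ_[2]) * X ^ 2) := by
  set f : ℤ_[2][X] := C ((2 : ℤ_[2]) ^ (2 * m)) + C ((2 : ℤ_[2]) ^ m * (β : ℤ_[2])) * X +
      C (α : ℤ_[2]) * X ^ 2
  have hα0 : (α : ℤ_[2]) ≠ 0 := Int.cast_ne_zero.2 fun h => by simp [h] at hα
  have hf : f = C (α : ℤ_[2]) * X ^ 2 + C ((2 : ℤ_[2]) ^ m * β) * X + C (2 ^ (2 * m)) := by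
    simp only [f]; ring
  have hdeg : f.natDegree = 2 := by rw [hf]; exact natDegree_quadratic hα0
  refine irreducible_of_isUnit_leadingCoeff_of_not_isRoot ?_ hdeg.ge (by omega)
    fun r hr => sq_ne_two_pow_sq_mul (PadicInt.toZModPow 3) hα hβ m (2 * α * r + 2 ^ m * β) 0 ?_
  · rw [hf, leadingCoeff_quadratic hα0, PadicInt.isUnit_intCast_iff, Nat.cast_ofNat,
      ← even_iff_two_dvd, Int.not_even_iff_odd]
    exact hα
  · have hr : (2 : ℤ_[2]) ^ (2 * m) + 2 ^ m * β * r + α * r ^ 2 = 0 := by simpa [f] using hr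
    linear_combination 4 * (α : ℤ_[2]) * hr

open PowerSeries in
theorem irreducible_powerSeries_quadratic {α β : ℤ} (hα : Odd α) (hβ : Odd β) {m : ℕ}
    (hm : 1 ≤ m) :
    Irreducible (C ((2 : ℤ) ^ (2 * m)) + C ((2 : ℤ) ^ m * β) * X + C α * X ^ 2) := by
  set F : ℤ⟦X⟧ := C ((2 : ℤ) ^ (2 * m)) + C ((2 : ℤ) ^ m * β) * X + C α * X ^ 2
  have hF0 : constantCoeff F = 2 ^ (2 * m) := by simp [F, sq, -map_pow, -eq_intCast]
  have hF1 : coeff 1 F = 2 ^ m * β := by simp [F, -map_pow, -eq_intCast]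
  have hF2 : coeff 2 F = α := by simp [F, -map_pow, -eq_intCast]
  refine ⟨fun hu => ?_, fun g h hgh => ?_⟩
  · rw [isUnit_iff_constantCoeff, hF0, isUnit_pow_iff (by omega)] at hu
    exact Int.prime_two.not_isUnit hu
  have e0 : constantCoeff g * constantCoeff h = 2 ^ (2 * m) := by rw [← hF0, hgh, map_mul]
  rcases Int.prime_two.isUnit_or_dvd_of_dvd_pow (Dvd.intro _ e0) with hg | ⟨a, ha⟩
  · exact .inl (isUnit_iff_constantCoeff.2 hg)
  rcases Int.prime_two.isUnit_or_dvd_of_dvd_pow (Dvd.intro_left _ e0) with hh | ⟨b, hb⟩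
  · exact .inr (isUnit_iff_constantCoeff.2 hh)
  have e1 : coeff 1 g * constantCoeff h + coeff 1 h * constantCoeff g = 2 ^ m * β := by
    rw [← coeff_one_mul, ← hgh, hF1]
  have e2 : coeff 2 g * constantCoeff h + coeff 1 g * coeff 1 h + coeff 2 h * constantCoeff g
      = α := by
    rw [← coeff_two_mul, ← hgh, hF2]
  refine (sq_ne_two_pow_sq_mul (Int.castRingHom (ZMod 8)) hα hβ m
    (coeff 1 g * constantCoeff h - coeff 1 h * constantCoeff g)
    (a * coeff 2 h + b * coeff 2 g) ?_).elim
  simp only [Int.cast_id]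
  linear_combination (coeff 1 g * constantCoeff h + coeff 1 h * constantCoeff g + 2 ^ m * β) * e1
    - 4 * coeff 1 g * coeff 1 h * e0 - 4 * 2 ^ (2 * m) * e2
    + 4 * 2 ^ (2 * m) * coeff 2 h * ha + 4 * 2 ^ (2 * m) * coeff 2 g * hb

theorem stmt_16_general (α β : ℤ) (hα : Odd α) (hβ : Odd β) (n m : ℕ)
    (hm : 1 ≤ m) (hnm : n = 2 * m) :
    Irreducible (Polynomial.C ((2 : ℤ_[2]) ^ n) +
      Polynomial.C ((2 : ℤ_[2]) ^ m * (β : ℤ_[2])) * Polynomial.X +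
      Polynomial.C (α : ℤ_[2]) * Polynomial.X ^ 2) ∧
    Irreducible ((PowerSeries.C : ℤ →+* PowerSeries ℤ) ((2 : ℤ) ^ n) +
      (PowerSeries.C : ℤ →+* PowerSeries ℤ) ((2 : ℤ) ^ m * β) * PowerSeries.X +
      (PowerSeries.C : ℤ →+* PowerSeries ℤ) α * PowerSeries.X ^ 2) := by
  subst hnm
  exact ⟨irreducible_padicInt_quadratic hα hβ m, irreducible_powerSeries_quadratic hα hβ hm⟩

theorem stmt_16 (α β : ℤ) (hα : Odd α) (hβ : Odd β) (n m : ℕ)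
    (hn : 1 ≤ n) (hm : 1 ≤ m) (hnm : n = 2 * m) :
    Irreducible (Polynomial.C ((2 : ℤ_[2]) ^ n) +
      Polynomial.C ((2 : ℤ_[2]) ^ m * (β : ℤ_[2])) * Polynomial.X +
      Polynomial.C (α : ℤ_[2]) * Polynomial.X ^ 2) ∧
    Irreducible ((PowerSeries.C : ℤ →+* PowerSeries ℤ) ((2 : ℤ) ^ n) +
      (PowerSeries.C : ℤ →+* PowerSeries ℤ) ((2 : ℤ) ^ m * β) * PowerSeries.X +
      (PowerSeries.C : ℤ →+* PowerSeries ℤ) α * PowerSeries.X ^ 2) :=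
  stmt_16_general α β hα hβ n m hm hnm
end

section
/- Let α, β be odd integers and ν, m ≥ 1 with m > ν + 1. The polynomial f(x) = 4^ν + 2ᵐβx + αx² is reducible in ℤ[[x]] if and only if: α ≡ 3 (mod 8) when m = ν + 2, and α ≡ 7 (mod 8) when m ≥ ν + 3. Equivalently, f(x) is reducible in ℤ[[x]] if and only if it is reducible in ℤ₂[x]. -/
/-!
Write `m = ν + μ + 1` and `d = 4 ^ μ β² - α`, an odd integer; the discriminant of
`f = 4 ^ ν + 2 ^ m β X + α X²` is `4 ^ (ν + 1) d`. Both kinds of reducibility turn out to be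
equivalent to `d` being a square in `ℤ₂`, which for odd `d` means `d ≡ 1 (mod 8)`.

In `ℤ₂[X]` the leading coefficient `α` is a unit, so a proper factorization has a linear factor
and `f` has a root, whence `d` is a square; conversely `d = s²` gives
`f = (2 ^ ν - (s - 2 ^ μ β) X) (2 ^ ν + (s + 2 ^ μ β) X)`.

In `ℤ⟦X⟧`, a proper factorization `f = a b` has even constant terms `a(0) b(0) = 4 ^ ν`, while
`f ≡ α X² (mod 2)`; so modulo 2 each factor has order one, and Weierstrass preparation over `ℤ₂`
writes `a = (X - r) · unit`, making `r` a root of `f`. Conversely, the linear factor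
`2 ^ ν - c X` above is associated in `ℤ₂⟦X⟧` to an integral power series `g` with `g(0) = 2 ^ ν`;
then `g ∣ f` in `ℤ₂⟦X⟧`, and because `g(0)` is a power of `2` the quotient is integral.
-/

open Polynomial IsLocalRing
open scoped PowerSeries

theorem Prime.dvd_of_dvd_pow_of_not_isUnit {M : Type*} [CommMonoidWithZero M] [IsCancelMulZero M]
    {p q : M} {n : ℕ} (hp : Prime p) (h : q ∣ p ^ n) (hq : ¬IsUnit q) : p ∣ q := by
  obtain ⟨_ | i, -, hi⟩ := (dvd_prime_pow hp n).1 h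
  · exact absurd (hi.isUnit_iff.2 (by simp)) hq
  · exact (dvd_pow_self p i.succ_ne_zero).trans hi.symm.dvd

theorem four_pow_eq_sq {R : Type*} [CommSemiring R] (n : ℕ) : (4 : R) ^ n = (2 ^ n) ^ 2 := by
  rw [← pow_mul, mul_comm, pow_mul]
  norm_num

theorem Int.four_pow_mul_sq_sub_modEq_one_iff {α β : ℤ} (hβ : Odd β) {μ : ℕ} (hμ : 1 ≤ μ) :
    4 ^ μ * β ^ 2 - α ≡ 1 [ZMOD 8] ↔ (μ = 1 ∧ α ≡ 3 [ZMOD 8]) ∨ (2 ≤ μ ∧ α ≡ 7 [ZMOD 8]) := by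
  obtain ⟨k, hk⟩ := Int.eight_dvd_sq_sub_one_of_odd hβ
  obtain rfl | hμ := hμ.eq_or_lt
  · norm_num [Int.ModEq]
    omega
  · obtain ⟨l, rfl⟩ := Nat.exists_eq_add_of_le hμ
    have : (4 : ℤ) ^ (1 + 1 + l) * β ^ 2 = 8 * (2 * 4 ^ l * β ^ 2) := by ring
    simp only [Int.ModEq, this]
    constructor <;> intro <;> omega

namespace PowerSeries

theorem order_eq_one_of_order_mul_eq_two {R : Type*} [Semiring R] [NoZeroDivisors R]
    {φ ψ : R⟦X⟧} (h : (φ * ψ).order = 2) (hφ : constantCoeff φ = 0) (hψ : constantCoeff ψ = 0) :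
    φ.order = 1 := by
  rw [order_mul] at h
  have h₁ := order_ne_zero_iff_constCoeff_eq_zero.2 hφ
  have h₂ := order_ne_zero_iff_constCoeff_eq_zero.2 hψ
  generalize φ.order = a at *
  generalize ψ.order = b at *
  induction a using ENat.recTopCoe with
  | top => simp at h
  | coe a =>
    induction b using ENat.recTopCoe with
    | top => simp at h
    | coe b =>
      norm_cast at *
      omega

variable {p : ℕ} [Fact p.Prime]

theorem dvd_of_map_intCast_dvd {f g : ℤ⟦X⟧} {k : ℕ} (hg : constantCoeff g = p ^ k)
    (h : g.map (Int.castRingHom ℤ_[p]) ∣ f.map (Int.castRingHom ℤ_[p])) : g ∣ f := by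
  obtain ⟨K, hK⟩ := h
  -- `p ^ k K_n = f_n - ∑_{i < n} g_{i+1} K_{n-1-i}`, and an integer divisible by `p ^ k` in `ℤ_[p]`
  -- is divisible by `p ^ k` in `ℤ`.
  have hp : (p : ℤ_[p]) ^ k ≠ 0 := pow_ne_zero _ (by exact_mod_cast (Fact.out : p.Prime).ne_zero)
  have hint : ∀ n, coeff n K ∈ (Int.castRingHom ℤ_[p]).range := by
    intro n
    induction n using Nat.strong_induction_on with
    | _ n ih =>
      have hn := congrArg (coeff n) hK
      rw [coeff_mul, Finset.Nat.sum_antidiagonal_eq_sum_range_succ_mk, Finset.sum_range_succ',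
        coeff_map, coeff_map, Nat.sub_zero, coeff_zero_eq_constantCoeff_apply, hg] at hn
      obtain ⟨D, hD⟩ : ∑ i ∈ Finset.range n, coeff (i + 1) (g.map (Int.castRingHom ℤ_[p])) *
          coeff (n - (i + 1)) K ∈ (Int.castRingHom ℤ_[p]).range :=
        Subring.sum_mem _ fun i hi ↦ Subring.mul_mem _ ⟨_, (coeff_map _ _ _).symm⟩
          (ih _ (by rw [Finset.mem_range] at hi; omega))
      simp only [eq_intCast] at hn hD
      have hK' : (p : ℤ_[p]) ^ k * coeff n K = ((coeff n f - D : ℤ) : ℤ_[p]) := by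
        push_cast at hn ⊢
        rw [hD, hn]
        ring
      obtain ⟨e, he⟩ := (PadicInt.pow_p_dvd_int_iff k _).1 ⟨_, hK'.symm⟩
      refine ⟨e, mul_left_cancel₀ hp ?_⟩
      rw [hK', he, eq_intCast]
      push_cast
      ring
  choose h hh using hint
  refine ⟨mk h, map_injective (Int.castRingHom ℤ_[p]) (RingHom.injective_int _) ?_⟩
  rw [map_mul, hK]
  congr 1
  ext n
  rw [coeff_map, coeff_mk, hh]

theorem exists_associated_map_intCast (c : ℤ_[p]) (k : ℕ) :
    ∃ g : ℤ⟦X⟧, constantCoeff g = p ^ k ∧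
      Associated (g.map (Int.castRingHom ℤ_[p])) (C ((p : ℤ_[p]) ^ k) - C c * X) := by
  -- `q₀ = 1` and `q_{n+1} = (c q_n - a_n) / p ^ k`, where the integer `a_n` approximates `c q_n`
  -- modulo `p ^ k`; the product `(p ^ k - c X) q` then has coefficients `p ^ k, -a₀, -a₁, …`.
  choose quo hquo using fun x : ℤ_[p] ↦ Ideal.mem_span_singleton'.1 (PadicInt.appr_spec k x)
  let q : ℕ → ℤ_[p] := fun n ↦ Nat.rec 1 (fun _ y ↦ quo (c * y)) n
  let g : ℤ⟦X⟧ := mk fun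
    | 0 => (p : ℤ) ^ k
    | n + 1 => -((c * q n).appr k : ℤ)
  have hq : IsUnit (mk q) := isUnit_iff_constantCoeff.2 (by simp [q])
  refine ⟨g, by simp [g], Associated.symm ⟨hq.unit, ?_⟩⟩
  rw [IsUnit.unit_spec]
  ext (_ | n)
  · simp [q, g]
  · have := hquo (c * q n)
    simp only [sub_mul, mul_assoc, map_sub, coeff_C_mul, coeff_succ_X_mul, coeff_mk, coeff_map, g]
    change _ * quo (c * q n) - _ = _
    rw [eq_intCast]
    push_cast
    linear_combination this

end PowerSeries

namespace Polynomial

variable {R : Type*} [CommRing R]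

theorem exists_isRoot_of_eq_mul [IsDomain R] {f a b : R[X]} (hf : f.natDegree = 2)
    (hlc : IsUnit f.leadingCoeff) (ha : ¬IsUnit a) (hb : ¬IsUnit b) (h : f = a * b) :
    ∃ r, f.IsRoot r := by
  have hf₀ : f ≠ 0 := by rintro rfl; simp at hf
  have ha₀ : a ≠ 0 := by rintro rfl; simp [h] at hf₀
  have hb₀ : b ≠ 0 := by rintro rfl; simp [h] at hf₀
  rw [h] at hf
  rw [h, leadingCoeff_mul] at hlc
  have hdeg₀ : ∀ u : R[X], ¬IsUnit u → IsUnit u.leadingCoeff → u.natDegree ≠ 0 := by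
    intro u hu hlc hdeg
    rw [eq_C_of_natDegree_eq_zero hdeg, isUnit_C] at hu
    exact hu (by rwa [leadingCoeff, hdeg] at hlc)
  have hdeg := natDegree_mul ha₀ hb₀
  have hda : a.natDegree = 1 := by
    have := hdeg₀ a ha (isUnit_of_mul_isUnit_left hlc)
    have := hdeg₀ b hb (isUnit_of_mul_isUnit_right hlc)
    omega
  obtain ⟨u, hu⟩ := isUnit_of_mul_isUnit_left hlc
  have hroot : a.IsRoot (-a.coeff 0 * ↑u⁻¹) := by
    have hu₁ : a.coeff 1 = u := by rw [hu, leadingCoeff, hda]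
    rw [IsRoot, eval_eq_sum_range, hda, Finset.sum_range_succ, Finset.sum_range_one, hu₁]
    simp [mul_left_comm (u : R)]
  exact ⟨_, h ▸ root_mul_right_of_isRoot b hroot⟩

theorem isSquare_sub_of_isRoot [IsDomain R] [IsIntegrallyClosed R] {a b c r : R} (hc : c ≠ 0)
    (hr : (C (c ^ 2) + C (2 * c * b) * X + C a * X ^ 2).IsRoot r) : IsSquare (b ^ 2 - a) := by
  have key : (a * r + c * b) ^ 2 = c ^ 2 * (b ^ 2 - a) := by
    simp only [IsRoot, eval_add, eval_mul, eval_C, eval_X, eval_pow] at hr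
    linear_combination a * hr
  obtain ⟨t, ht⟩ := (IsIntegrallyClosed.pow_dvd_pow_iff two_ne_zero).1 ⟨_, key⟩
  refine ⟨t, mul_left_cancel₀ (pow_ne_zero 2 hc) ?_⟩
  rw [← key, ht]
  ring

theorem eq_mul_of_sq_eq {a b c s : R} (hs : s ^ 2 = b ^ 2 - a) :
    C (c ^ 2) + C (2 * c * b) * X + C a * X ^ 2 =
      (C c - C (s - b) * X) * (C c - C (-s - b) * X) := by
  have : a = b ^ 2 - s ^ 2 := by linear_combination hs
  subst this
  simp only [map_sub, map_mul, map_pow, map_neg, map_ofNat]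
  ring

theorem exists_isRoot_of_coe_eq_mul [IsLocalRing R]
    [IsAdicComplete (maximalIdeal R) R] {f : R[X]} {A B : R⟦X⟧} (h : (f : R⟦X⟧) = A * B)
    (hA : (A.map (residue R)).order = 1) : ∃ r, f.IsRoot r := by
  -- Weierstrass preparation gives `A = (X - r) u` with `u` a unit, so the remainder
  -- `f %ₘ (X - r) = f(r)` is a multiple of `A` of degree `< 1`, hence zero.
  have hA₀ : A.map (residue R) ≠ 0 := by
    rintro h₀
    simp [h₀] at hA
  obtain ⟨P, U, hPU⟩ := A.exists_isWeierstrassFactorization hA₀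
  have hP : P = X - C (-P.coeff 0) := by
    rw [map_neg, sub_neg_eq_add]
    exact hPU.isDistinguishedAt.monic.eq_X_add_C
      (by rw [hPU.natDegree_eq_toNat_order_map, hA]; rfl)
  obtain ⟨-, ⟨u, rfl⟩, hAPu⟩ := hPU
  have hrem : A * (B - ↑u⁻¹ * ↑(f /ₘ P)) = ↑(f %ₘ P) := by
    rw [eq_sub_of_add_eq (modByMonic_add_div f P), coe_sub, coe_mul, h, hAPu]
    simp only [mul_sub, mul_assoc, Units.mul_inv_cancel_left]
  have hdeg : (f %ₘ P).degree < (A.map (Ideal.Quotient.mk (maximalIdeal R))).order.toNat := by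
    rw [hP, modByMonic_X_sub_C_eq_C_eval]
    exact (degree_C_le).trans_lt (by erw [hA]; decide)
  refine ⟨-P.coeff 0, ?_⟩
  have := ((PowerSeries.IsWeierstrassDivisor.of_map_ne_zero hA₀).eq_zero_of_mul_eq hdeg hrem).2
  rwa [hP, modByMonic_X_sub_C_eq_C_eval, C_eq_zero] at this

end Polynomial

namespace PadicInt

variable {p : ℕ} [Fact p.Prime]

theorem not_isUnit_intCast_iff {n : ℤ} : ¬IsUnit (n : ℤ_[p]) ↔ (p : ℤ) ∣ n :=
  not_isUnit_iff.trans (norm_int_lt_one_iff_dvd n)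

theorem residue_intCast_eq_zero_iff {n : ℤ} : residue ℤ_[p] n = 0 ↔ (p : ℤ) ∣ n := by
  rw [residue_eq_zero_iff, mem_maximalIdeal, mem_nonunits_iff, not_isUnit_intCast_iff]

theorem isSquare_intCast_iff_modEq_eight {d : ℤ} (hd : Odd d) :
    IsSquare (d : ℤ_[2]) ↔ d ≡ 1 [ZMOD 8] := by
  rw [Int.odd_iff] at hd
  unfold Int.ModEq
  constructor
  · rintro ⟨s, hs⟩
    have hsq₈ : ∀ x : ZMod 8, x * x = 0 ∨ x * x = 1 ∨ x * x = 4 := by decide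
    have h8 : ((d : ℤ) : ZMod 8) = toZModPow 3 s * toZModPow 3 s := by
      rw [← map_mul, ← hs, map_intCast]
    rcases hsq₈ (toZModPow 3 s) with h | h | h <;> rw [← h8] at h
    · have := (ZMod.intCast_eq_intCast_iff' d 0 8).1 (by exact_mod_cast h)
      omega
    · exact (ZMod.intCast_eq_intCast_iff' d 1 8).1 (by exact_mod_cast h)
    · have := (ZMod.intCast_eq_intCast_iff' d 4 8).1 (by exact_mod_cast h)
      omega
  · intro h
    -- Hensel's lemma for `X² - d` at `1`: `‖1 - d‖ ≤ 2⁻³ < ‖2‖²`.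
    have hnorm : ‖(X ^ 2 - C d : ℤ[X]).aeval (1 : ℤ_[2])‖ <
        ‖(X ^ 2 - C d : ℤ[X]).derivative.aeval (1 : ℤ_[2])‖ ^ 2 := by
      have h₁ : ‖((1 - d : ℤ) : ℤ_[2])‖ ≤ ((2 : ℕ) : ℝ) ^ (-(3 : ℕ) : ℤ) :=
        norm_int_le_pow_iff_dvd.2 (by omega)
      have h₂ : ‖(2 : ℤ_[2])‖ = 2⁻¹ := by exact_mod_cast norm_p (p := 2)
      have e₁ : (X ^ 2 - C d : ℤ[X]).aeval (1 : ℤ_[2]) = ((1 - d : ℤ) : ℤ_[2]) := by simp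
      have e₂ : (X ^ 2 - C d : ℤ[X]).derivative.aeval (1 : ℤ_[2]) = 2 := by
        simpa using map_ofNat (aeval (1 : ℤ_[2])) 2
      rw [e₁, e₂, h₂]
      refine h₁.trans_lt ?_
      norm_num
    obtain ⟨z, hz, -⟩ := hensels_lemma hnorm
    exact ⟨z, by simpa [sub_eq_zero, sq, eq_comm] using hz⟩

end PadicInt

noncomputable def quadratic (ν m : ℕ) (α β : ℤ) : ℤ[X] :=
  C (4 ^ ν) + C (2 ^ m * β) * X + C α * X ^ 2

section Quadratic

variable {ν μ : ℕ} {α β : ℤ}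

theorem coe_quadratic (m : ℕ) :
    (quadratic ν m α β : ℤ⟦X⟧) = PowerSeries.C ((4 : ℤ) ^ ν) +
      PowerSeries.C ((2 : ℤ) ^ m * β) * PowerSeries.X + PowerSeries.C α * PowerSeries.X ^ 2 := by
  simp only [quadratic, coe_add, coe_mul, coe_C, coe_X, coe_pow]

theorem map_quadratic {R : Type*} [CommRing R] (m : ℕ) :
    (quadratic ν m α β).map (Int.castRingHom R) =
      C ((4 : R) ^ ν) + C ((2 : R) ^ m * (β : R)) * X + C (α : R) * X ^ 2 := by
  simp only [quadratic, Polynomial.map_add, Polynomial.map_mul, Polynomial.map_C,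
    Polynomial.map_pow, Polynomial.map_X, Int.coe_castRingHom, Int.cast_pow, Int.cast_mul,
    Int.cast_ofNat]

theorem map_quadratic_eq_sq {R : Type*} [CommRing R] :
    (quadratic ν (ν + μ + 1) α β).map (Int.castRingHom R) =
      C ((2 ^ ν) ^ 2) + C (2 * 2 ^ ν * (2 ^ μ * (β : R))) * X + C (α : R) * X ^ 2 := by
  rw [map_quadratic, four_pow_eq_sq,
    show (2 : R) ^ (ν + μ + 1) * β = 2 * 2 ^ ν * (2 ^ μ * β) by ring]

theorem intCast_four_pow_mul_sq_sub {R : Type*} [CommRing R] :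
    ((4 ^ μ * β ^ 2 - α : ℤ) : R) = (2 ^ μ * (β : R)) ^ 2 - α := by
  push_cast
  rw [four_pow_eq_sq]
  ring

theorem isSquare_of_isRoot_map_quadratic {r : ℤ_[2]}
    (hr : ((quadratic ν (ν + μ + 1) α β).map (Int.castRingHom ℤ_[2])).IsRoot r) :
    IsSquare ((4 ^ μ * β ^ 2 - α : ℤ) : ℤ_[2]) := by
  rw [map_quadratic_eq_sq] at hr
  rw [intCast_four_pow_mul_sq_sub]
  exact isSquare_sub_of_isRoot (pow_ne_zero ν two_ne_zero) hr

theorem map_quadratic_eq_mul_of_isSquare (hsq : IsSquare ((4 ^ μ * β ^ 2 - α : ℤ) : ℤ_[2])) :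
    ∃ c₁ c₂ : ℤ_[2], (quadratic ν (ν + μ + 1) α β).map (Int.castRingHom ℤ_[2]) =
      (C (2 ^ ν) - C c₁ * X) * (C (2 ^ ν) - C c₂ * X) := by
  obtain ⟨s, hs⟩ := hsq
  rw [intCast_four_pow_mul_sq_sub, ← sq] at hs
  exact ⟨_, _, map_quadratic_eq_sq.trans (eq_mul_of_sq_eq hs.symm)⟩

theorem exists_isRoot_of_coe_quadratic_eq_mul (hα : Odd α) (hν : ν ≠ 0) {m : ℕ} (hm : m ≠ 0)
    {a b : ℤ⟦X⟧} (ha : ¬IsUnit a) (hb : ¬IsUnit b) (h : (quadratic ν m α β : ℤ⟦X⟧) = a * b) :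
    ∃ r, ((quadratic ν m α β).map (Int.castRingHom ℤ_[2])).IsRoot r := by
  let ι := Int.castRingHom ℤ_[2]
  let ρ := (residue ℤ_[2]).comp ι
  have hρ (n : ℤ) : ρ n = 0 ↔ 2 ∣ n := by
    simpa [ρ, ι] using PadicInt.residue_intCast_eq_zero_iff (p := 2) (n := n)
  have hρ₂ : ρ 2 = 0 := by exact_mod_cast (hρ 2).2 dvd_rfl
  have hρα : ρ α ≠ 0 := (hρ α).not.2 (Int.not_even_iff_odd.2 hα ∘ even_iff_two_dvd.2)
  -- Modulo 2 the quadratic is `α X²`, and both factors have even constant term.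
  have horder : (a.map ρ * b.map ρ).order = 2 := by
    rw [← map_mul, ← h, coe_quadratic]
    simp only [map_add, map_mul, PowerSeries.map_C, PowerSeries.map_X, map_pow,
      show (4 : ℤ) = 2 * 2 by rfl, hρ₂, mul_zero, zero_pow hν, zero_pow hm, map_zero, zero_mul,
      zero_add, PowerSeries.order_mul, PowerSeries.order_X_pow,
      PowerSeries.order_zero_of_unit (hρα.isUnit.map PowerSeries.C)]
    rfl
  have hprod : PowerSeries.constantCoeff a * PowerSeries.constantCoeff b = 2 ^ (2 * ν) := by
    rw [← map_mul, ← h, coe_quadratic, pow_mul]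
    simp only [map_add, map_mul, map_pow, PowerSeries.constantCoeff_C,
      PowerSeries.constantCoeff_X, mul_zero, zero_pow two_ne_zero, add_zero]
    norm_num
  have hc₀ {u : ℤ⟦X⟧} (hu : ¬IsUnit u) (hdvd : PowerSeries.constantCoeff u ∣ 2 ^ (2 * ν)) :
      PowerSeries.constantCoeff (u.map ρ) = 0 := by
    rw [← PowerSeries.coeff_zero_eq_constantCoeff_apply, PowerSeries.coeff_map,
      PowerSeries.coeff_zero_eq_constantCoeff_apply, hρ]
    exact Int.prime_two.dvd_of_dvd_pow_of_not_isUnit hdvd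
      (mt PowerSeries.isUnit_iff_constantCoeff.2 hu)
  refine exists_isRoot_of_coe_eq_mul (B := b.map ι) (by rw [polynomial_map_coe, h, map_mul]) ?_
  rw [← RingHom.comp_apply (PowerSeries.map _), ← PowerSeries.map_comp]
  exact PowerSeries.order_eq_one_of_order_mul_eq_two horder (hc₀ ha ⟨_, hprod.symm⟩)
    (hc₀ hb (Dvd.intro_left _ hprod))

theorem exists_map_quadratic_eq_mul_iff (hα : Odd α) (hν : ν ≠ 0) :
    (∃ a b : ℤ_[2][X], ¬IsUnit a ∧ ¬IsUnit b ∧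
      (quadratic ν (ν + μ + 1) α β).map (Int.castRingHom ℤ_[2]) = a * b) ↔
    IsSquare ((4 ^ μ * β ^ 2 - α : ℤ) : ℤ_[2]) := by
  constructor
  · rintro ⟨a, b, ha, hb, h⟩
    have hαu : IsUnit (α : ℤ_[2]) := by
      by_contra hα'
      exact Int.not_even_iff_odd.2 hα
        (even_iff_two_dvd.2 (by exact_mod_cast PadicInt.not_isUnit_intCast_iff.1 hα'))
    have hF : (quadratic ν (ν + μ + 1) α β).map (Int.castRingHom ℤ_[2]) =
        C (α : ℤ_[2]) * X ^ 2 + C (2 ^ (ν + μ + 1) * (β : ℤ_[2])) * X + C (4 ^ ν) := by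
      rw [map_quadratic]
      ring
    obtain ⟨r, hr⟩ := exists_isRoot_of_eq_mul (by rw [hF, natDegree_quadratic hαu.ne_zero])
      (by rwa [hF, leadingCoeff_quadratic hαu.ne_zero]) ha hb h
    exact isSquare_of_isRoot_map_quadratic hr
  · intro hsq
    obtain ⟨c₁, c₂, h⟩ := map_quadratic_eq_mul_of_isSquare (ν := ν) hsq
    have h₂ : ¬IsUnit ((2 : ℤ_[2]) ^ ν) :=
      (isUnit_pow_iff hν).not.2 (by exact_mod_cast (PadicInt.prime_p (p := 2)).not_isUnit)
    have hL (c : ℤ_[2]) : ¬IsUnit (C (2 ^ ν) - C c * X) := fun hu ↦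
      h₂ (by simpa using hu.map (evalRingHom 0))
    exact ⟨_, _, hL c₁, hL c₂, h⟩

theorem exists_coe_quadratic_eq_mul_iff (hα : Odd α) (hν : ν ≠ 0) :
    (∃ a b : ℤ⟦X⟧, ¬IsUnit a ∧ ¬IsUnit b ∧ (quadratic ν (ν + μ + 1) α β : ℤ⟦X⟧) = a * b) ↔
    IsSquare ((4 ^ μ * β ^ 2 - α : ℤ) : ℤ_[2]) := by
  constructor
  · rintro ⟨a, b, ha, hb, h⟩
    obtain ⟨r, hr⟩ := exists_isRoot_of_coe_quadratic_eq_mul hα hν (Nat.succ_ne_zero _) ha hb h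
    exact isSquare_of_isRoot_map_quadratic hr
  · intro hsq
    obtain ⟨c₁, c₂, h⟩ := map_quadratic_eq_mul_of_isSquare (ν := ν) hsq
    obtain ⟨g, hg₀, hg⟩ := PowerSeries.exists_associated_map_intCast (p := 2) c₁ ν
    obtain ⟨k, hk⟩ := PowerSeries.dvd_of_map_intCast_dvd hg₀ <| hg.dvd.trans
      ⟨(C (2 ^ ν) - C c₂ * X : ℤ_[2][X]), by rw [← polynomial_map_coe, h]; simp⟩
    have h₂ : ¬IsUnit ((2 : ℤ) ^ ν) := (isUnit_pow_iff hν).not.2 Int.prime_two.not_isUnit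
    have hk₀ : PowerSeries.constantCoeff k = 2 ^ ν := by
      have h₀ := congrArg PowerSeries.constantCoeff hk
      simp only [coe_quadratic, map_add, map_mul, PowerSeries.constantCoeff_C,
        PowerSeries.constantCoeff_X, mul_zero, add_zero, hg₀, Nat.cast_ofNat, four_pow_eq_sq,
        sq] at h₀
      exact (mul_left_cancel₀ (by positivity) h₀).symm
    refine ⟨g, k, fun hu ↦ h₂ ?_, fun hu ↦ h₂ ?_, hk⟩
    · simpa [hg₀] using PowerSeries.isUnit_iff_constantCoeff.1 hu
    · simpa [hk₀] using PowerSeries.isUnit_iff_constantCoeff.1 hu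

end Quadratic

theorem stmt_18 (α β : ℤ) (hα : Odd α) (hβ : Odd β) (ν m : ℕ)
    (hν : 1 ≤ ν) (hm : ν + 1 < m) :
    ((∃ a b : PowerSeries ℤ, ¬ IsUnit a ∧ ¬ IsUnit b ∧
        (PowerSeries.C (R := ℤ)) ((4 : ℤ) ^ ν) +
          (PowerSeries.C (R := ℤ)) ((2 : ℤ) ^ m * β) * PowerSeries.X +
          (PowerSeries.C (R := ℤ)) α * PowerSeries.X ^ 2 = a * b) ↔
      ((m = ν + 2 ∧ α ≡ 3 [ZMOD 8]) ∨ (ν + 3 ≤ m ∧ α ≡ 7 [ZMOD 8]))) ∧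
    ((∃ a b : PowerSeries ℤ, ¬ IsUnit a ∧ ¬ IsUnit b ∧
        (PowerSeries.C (R := ℤ)) ((4 : ℤ) ^ ν) +
          (PowerSeries.C (R := ℤ)) ((2 : ℤ) ^ m * β) * PowerSeries.X +
          (PowerSeries.C (R := ℤ)) α * PowerSeries.X ^ 2 = a * b) ↔
      (∃ a b : Polynomial ℤ_[2], ¬ IsUnit a ∧ ¬ IsUnit b ∧
        Polynomial.C ((4 : ℤ_[2]) ^ ν) +
          Polynomial.C ((2 : ℤ_[2]) ^ m * (β : ℤ_[2])) * Polynomial.X +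
          Polynomial.C (α : ℤ_[2]) * Polynomial.X ^ 2 = a * b)) := by
  obtain ⟨μ, hμ, rfl⟩ : ∃ μ, 1 ≤ μ ∧ m = ν + μ + 1 := ⟨m - ν - 1, by omega, by omega⟩
  have hν₀ : ν ≠ 0 := by omega
  have hd : Odd (4 ^ μ * β ^ 2 - α) :=
    ((Int.even_pow.2 ⟨by decide, by omega⟩).mul_right _).sub_odd hα
  rw [← coe_quadratic, ← map_quadratic, exists_coe_quadratic_eq_mul_iff hα hν₀,
    exists_map_quadratic_eq_mul_iff hα hν₀, PadicInt.isSquare_intCast_iff_modEq_eight hd,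
    Int.four_pow_mul_sq_sub_modEq_one_iff hβ hμ]
  simp only [show ν + μ + 1 = ν + 2 ↔ μ = 1 by omega, show ν + 3 ≤ ν + μ + 1 ↔ 2 ≤ μ by omega,
    and_self]
end
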